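/- Let n, m be positive integers and λ ∈ ℂ. Let W := { (R^T L_m^{(1)} + Δ_n S, R^T L_m^{(2)} + Λ_n(λ) S) : S ∈ ℂ^{n×(2m+1)}, R ∈ ℂ^{(2m+1)×n} } ⊆ ℂ^{n×(2m+1)} × ℂ^{n×(2m+1)}, and let P := { (0, Y) : Y ∈ ℂ^{n×(2m+1)}, Y_{ij} = 0 unless j = 1 }. Then ℂ^{n×(2m+1)} × ℂ^{n×(2m+1)} = W ⊕ P. -/

import Mathlib

open Matrix

noncomputable section

/-- `Λ_n(λ)`: the `n × n` matrix with `(i,j)` entry `λ` if `i + j = n + 1`, `1` if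
`i + j = n + 2`, and `0` otherwise (1-based indices). -/
def lamM (n : ℕ) (lam : ℂ) : Matrix (Fin n) (Fin n) ℂ :=
  Matrix.of fun i j =>
    if (i : ℕ) + 1 + ((j : ℕ) + 1) = n + 1 then lam
    else if (i : ℕ) + 1 + ((j : ℕ) + 1) = n + 2 then 1 else 0

/-- `Δ_n`: the `n × n` matrix with `(i,j)` entry `1` if `i + j = n + 1` and `0`
otherwise (1-based indices). -/
def delM (n : ℕ) : Matrix (Fin n) (Fin n) ℂ :=
  Matrix.of fun i j => if (i : ℕ) + 1 + ((j : ℕ) + 1) = n + 1 then 1 else 0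

/-- `F_n`: the `n × (n+1)` matrix with `F_n(i,j) = 1` exactly when `j = i`. -/
def FM (n : ℕ) : Matrix (Fin n) (Fin (n + 1)) ℂ :=
  Matrix.of fun i j => if (j : ℕ) = (i : ℕ) then 1 else 0

/-- `G_n`: the `n × (n+1)` matrix with `G_n(i,j) = 1` exactly when `j = i + 1`. -/
def GM (n : ℕ) : Matrix (Fin n) (Fin (n + 1)) ℂ :=
  Matrix.of fun i j => if (j : ℕ) = (i : ℕ) + 1 then 1 else 0

/-- `L_n^{(1)} = [[0, F_nᵀ], [F_n, 0]]`, a symmetric `(2n+1) × (2n+1)` matrix. -/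
def L1M (n : ℕ) : Matrix (Fin (2 * n + 1)) (Fin (2 * n + 1)) ℂ :=
  Matrix.reindex (finSumFinEquiv.trans (finCongr (by omega)))
    (finSumFinEquiv.trans (finCongr (by omega)))
    (Matrix.fromBlocks 0 (FM n)ᵀ (FM n) 0)

/-- `L_n^{(2)} = [[0, G_nᵀ], [G_n, 0]]`, a symmetric `(2n+1) × (2n+1)` matrix. -/
def L2M (n : ℕ) : Matrix (Fin (2 * n + 1)) (Fin (2 * n + 1)) ℂ :=
  Matrix.reindex (finSumFinEquiv.trans (finCongr (by omega)))
    (finSumFinEquiv.trans (finCongr (by omega)))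
    (Matrix.fromBlocks 0 (GM n)ᵀ (GM n) 0)

theorem lamM_isSymm (n : ℕ) (lam : ℂ) : (lamM n lam).IsSymm := by
  unfold Matrix.IsSymm lamM
  ext i j
  simp only [Matrix.transpose_apply, Matrix.of_apply]
  split_ifs <;> first | rfl | omega

theorem delM_isSymm (n : ℕ) : (delM n).IsSymm := by
  unfold Matrix.IsSymm delM
  ext i j
  simp only [Matrix.transpose_apply, Matrix.of_apply]
  split_ifs <;> first | rfl | omega

theorem L1M_isSymm (n : ℕ) : (L1M n).IsSymm := by
  unfold Matrix.IsSymm L1M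
  rw [Matrix.transpose_reindex, Matrix.fromBlocks_transpose]
  simp

theorem L2M_isSymm (n : ℕ) : (L2M n).IsSymm := by
  unfold Matrix.IsSymm L2M
  rw [Matrix.transpose_reindex, Matrix.fromBlocks_transpose]
  simp

/-- The type of canonical summands: `H_k(λ)`, `K_k`, `L_k`. -/
inductive CanType where
  | H : ℕ → ℂ → CanType
  | K : ℕ → CanType
  | L : ℕ → CanType

/-- The size of a canonical pair. -/
def CanType.size : CanType → ℕ
  | .H k _ => k
  | .K k => k
  | .L k => 2 * k + 1

/-- The size parameter of a canonical pair. -/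
def CanType.param : CanType → ℕ
  | .H k _ => k
  | .K k => k
  | .L k => k

/-- The first matrix of a canonical pair. -/
def CanType.A : (c : CanType) → Matrix (Fin c.size) (Fin c.size) ℂ
  | .H k _ => delM k
  | .K k => lamM k 0
  | .L k => L1M k

/-- The second matrix of a canonical pair. -/
def CanType.B : (c : CanType) → Matrix (Fin c.size) (Fin c.size) ℂ
  | .H k lam => lamM k lam
  | .K k => delM k
  | .L k => L2M k

/-- Congruence of pairs of square complex matrices (over possibly different index
types): `(A', B') = (Sᵀ A S, Sᵀ B S)` for some invertible `S`. -/
def CongruentPairs {ι κ : Type} [Fintype ι] [Fintype κ] [DecidableEq ι] [DecidableEq κ]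
    (p : Matrix ι ι ℂ × Matrix ι ι ℂ) (q : Matrix κ κ ℂ × Matrix κ κ ℂ) : Prop :=
  ∃ S : Matrix ι κ ℂ, (∃ T : Matrix κ ι ℂ, S * T = 1 ∧ T * S = 1) ∧
    q.1 = Sᵀ * p.1 * S ∧ q.2 = Sᵀ * p.2 * S

/-- The linear map `(S, R) ↦ (Rᵀ A_j + A_i S, Rᵀ B_j + B_i S)`. -/
def offMap {ι κ : Type} [Fintype ι] [Fintype κ] (Ai Bi : Matrix ι ι ℂ)
    (Aj Bj : Matrix κ κ ℂ) :
    (Matrix ι κ ℂ × Matrix κ ι ℂ) →ₗ[ℂ] (Matrix ι κ ℂ × Matrix ι κ ℂ) where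
  toFun SR := (SR.2ᵀ * Aj + Ai * SR.1, SR.2ᵀ * Bj + Bi * SR.1)
  map_add' x y := by
    simp only [Prod.fst_add, Prod.snd_add, Matrix.transpose_add, Matrix.add_mul,
      Matrix.mul_add, Prod.mk_add_mk, Prod.ext_iff]
    constructor <;> abel
  map_smul' c x := by
    simp only [Prod.smul_fst, Prod.smul_snd, Matrix.transpose_smul, Matrix.smul_mul,
      Matrix.mul_smul, RingHom.id_apply, Prod.smul_mk, smul_add]

/-- `W = {(Rᵀ A_j + A_i S, Rᵀ B_j + B_i S) : S, R}`. -/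
def WSpace {ι κ : Type} [Fintype ι] [Fintype κ] (Ai Bi : Matrix ι ι ℂ)
    (Aj Bj : Matrix κ κ ℂ) : Submodule ℂ (Matrix ι κ ℂ × Matrix ι κ ℂ) :=
  LinearMap.range (offMap Ai Bi Aj Bj)

/-- The space of pairs of (rectangular) matrices supported on given sets of positions. -/
def entryPattern {ι κ : Type} (S1 S2 : Set (ι × κ)) :
    Submodule ℂ (Matrix ι κ ℂ × Matrix ι κ ℂ) where
  carrier := {x | (∀ i j, (i, j) ∉ S1 → x.1 i j = 0) ∧ (∀ i j, (i, j) ∉ S2 → x.2 i j = 0)}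
  add_mem' := by
    rintro a b ⟨ha1, ha2⟩ ⟨hb1, hb2⟩
    exact ⟨fun i j h => by show a.1 i j + b.1 i j = 0; rw [ha1 i j h, hb1 i j h, add_zero],
      fun i j h => by show a.2 i j + b.2 i j = 0; rw [ha2 i j h, hb2 i j h, add_zero]⟩
  zero_mem' := ⟨fun _ _ _ => rfl, fun _ _ _ => rfl⟩
  smul_mem' := by
    rintro c a ⟨ha1, ha2⟩
    exact ⟨fun i j h => by show c * a.1 i j = 0; rw [ha1 i j h, mul_zero],
      fun i j h => by show c * a.2 i j = 0; rw [ha2 i j h, mul_zero]⟩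


end

/-!
Because `Δ_n` is invertible, `S` can be eliminated: with `K = Λ_n(λ) Δ_n⁻¹`, a pair `(X, Y)` lies
in `W` iff `Y - K X` lies in the range of `T ↦ T L_m^{(2)} - K T L_m^{(1)}`, so it suffices to
show that this range is complementary to the matrices supported on the first column.
Splitting the columns of `T` as `(U | V)` along the blocks of `L_m`, the map becomes
`(U, V) ↦ (V G_m - K V F_m | U G_mᵀ - K U F_mᵀ)`. Right multiplication by `G_mᵀ` deletes the first
column and `G_m G_mᵀ = 1`, so on the first block (after deleting that column) and on the second
block (after substituting `U = Y G_m`) the map becomes `V ↦ V - K V N` with `N` a nilpotent shift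
matrix; such a map is invertible.
-/

lemma LinearMap.isCompl_range_of {R M N : Type*} [Ring R] [AddCommGroup M] [AddCommGroup N]
    [Module R M] [Module R N] (f : M →ₗ[R] N) (C : Submodule R N)
    (hdisj : ∀ x, f x ∈ C → f x = 0) (hspan : ∀ z, ∃ x, z - f x ∈ C) :
    IsCompl (LinearMap.range f) C := by
  refine isCompl_iff.mpr ⟨Submodule.disjoint_def.mpr ?_, codisjoint_iff.mpr (eq_top_iff.mpr ?_)⟩
  · rintro _ ⟨x, rfl⟩ hx
    exact hdisj x hx
  · intro z _
    obtain ⟨x, hx⟩ := hspan z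
    exact Submodule.mem_sup.mpr ⟨f x, ⟨x, rfl⟩, z - f x, hx, add_sub_cancel _ _⟩

namespace Matrix

variable {R ι κ : Type*} [CommRing R] [Fintype ι] [Fintype κ]

def mulLeftRight (K : Matrix ι ι R) (N : Matrix κ κ R) : Module.End R (Matrix ι κ R) where
  toFun V := K * V * N
  map_add' V W := by simp only [Matrix.mul_add, Matrix.add_mul]
  map_smul' c V := by simp only [Matrix.mul_smul, Matrix.smul_mul, RingHom.id_apply]

@[simp]
lemma mulLeftRight_apply (K : Matrix ι ι R) (N : Matrix κ κ R) (V : Matrix ι κ R) :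
    mulLeftRight K N V = K * V * N := rfl

variable [DecidableEq ι] [DecidableEq κ]

lemma mulLeftRight_pow (K : Matrix ι ι R) (N : Matrix κ κ R) (k : ℕ) :
    mulLeftRight K N ^ k = mulLeftRight (K ^ k) (N ^ k) := by
  induction k with
  | zero => ext1 V; simp
  | succ k ih =>
    ext1 V
    rw [pow_succ, Module.End.mul_apply, ih, pow_succ K, pow_succ' N]
    simp only [mulLeftRight_apply, Matrix.mul_assoc]

lemma isNilpotent_mulLeftRight (K : Matrix ι ι R) {N : Matrix κ κ R} (hN : IsNilpotent N) :
    IsNilpotent (mulLeftRight K N) := by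
  obtain ⟨k, hk⟩ := hN
  exact ⟨k, by ext1 V; simp [mulLeftRight_pow, hk]⟩

lemma bijective_sub_mul_mul_of_isNilpotent (K : Matrix ι ι R) {N : Matrix κ κ R}
    (hN : IsNilpotent N) :
    Function.Bijective fun V : Matrix ι κ R => V - K * V * N :=
  (Module.End.isUnit_iff _).mp (isNilpotent_mulLeftRight K hN).isUnit_one_sub

lemma isNilpotent_of_strictlyLowerTriangular {m : ℕ} (N : Matrix (Fin m) (Fin m) R)
    (hN : ∀ i j, i ≤ j → N i j = 0) : IsNilpotent N := by
  have key : ∀ k (i j : Fin m), (i : ℕ) < j + k → (N ^ k) i j = 0 := by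
    intro k
    induction k with
    | zero => intro i j h; exact one_apply_ne (Fin.ne_of_lt h)
    | succ k ih =>
      intro i j h
      rw [pow_succ, mul_apply]
      refine Finset.sum_eq_zero fun l _ => ?_
      rcases le_or_gt l j with hl | hl
      · rw [hN l j hl, mul_zero]
      · rw [ih i l (by omega), zero_mul]
  exact ⟨m, by ext i j; exact key m i j (by omega)⟩

end Matrix

section Reduction

variable {ι κ : Type}

def supportedMatrices (s : Set (ι × κ)) : Submodule ℂ (Matrix ι κ ℂ) where
  carrier := {Z | ∀ i j, (i, j) ∉ s → Z i j = 0}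
  add_mem' hZ hZ' i j h := by rw [Matrix.add_apply, hZ i j h, hZ' i j h, add_zero]
  zero_mem' _ _ _ := rfl
  smul_mem' c _ hZ i j h := by rw [Matrix.smul_apply, hZ i j h, smul_zero]

lemma mem_supportedMatrices {s : Set (ι × κ)} {Z : Matrix ι κ ℂ} :
    Z ∈ supportedMatrices s ↔ ∀ i j, (i, j) ∉ s → Z i j = 0 := Iff.rfl

lemma mem_entryPattern_empty {s : Set (ι × κ)} {x : Matrix ι κ ℂ × Matrix ι κ ℂ} :
    x ∈ entryPattern ∅ s ↔ x.1 = 0 ∧ x.2 ∈ supportedMatrices s := by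
  change (_ ∧ _) ↔ _
  simp [mem_supportedMatrices, ← Matrix.ext_iff]

variable [Fintype ι] [Fintype κ]

def reducedOffMap (K : Matrix ι ι ℂ) (Aj Bj : Matrix κ κ ℂ) :
    Matrix ι κ ℂ →ₗ[ℂ] Matrix ι κ ℂ where
  toFun T := T * Bj - K * T * Aj
  map_add' T T' := by simp only [Matrix.add_mul, Matrix.mul_add]; abel
  map_smul' c T := by simp only [Matrix.smul_mul, Matrix.mul_smul, smul_sub, RingHom.id_apply]

@[simp]
lemma reducedOffMap_apply (K : Matrix ι ι ℂ) (Aj Bj : Matrix κ κ ℂ) (T : Matrix ι κ ℂ) :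
    reducedOffMap K Aj Bj T = T * Bj - K * T * Aj := rfl

variable [DecidableEq ι]

lemma mem_WSpace_iff {A : Matrix ι ι ℂ} (hA : IsUnit A.det) (B : Matrix ι ι ℂ)
    (Aj Bj : Matrix κ κ ℂ) (X Y : Matrix ι κ ℂ) :
    (X, Y) ∈ WSpace A B Aj Bj ↔
      Y - B * A⁻¹ * X ∈ LinearMap.range (reducedOffMap (B * A⁻¹) Aj Bj) := by
  have hBA : B * A⁻¹ * A = B := by rw [Matrix.mul_assoc, nonsing_inv_mul A hA, Matrix.mul_one]
  constructor
  · rintro ⟨⟨S, R⟩, hSR⟩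
    obtain ⟨rfl, rfl⟩ := Prod.mk.inj hSR
    refine ⟨Rᵀ, ?_⟩
    simp only [reducedOffMap_apply, Matrix.mul_add, ← Matrix.mul_assoc, hBA]
    abel
  · rintro ⟨T, hT⟩
    refine ⟨(A⁻¹ * (X - T * Aj), Tᵀ), Prod.ext ?_ ?_⟩
    · change Tᵀᵀ * Aj + A * (A⁻¹ * (X - T * Aj)) = X
      rw [transpose_transpose, ← Matrix.mul_assoc, mul_nonsing_inv A hA, Matrix.one_mul,
        add_sub_cancel]
    · rw [reducedOffMap_apply] at hT
      change Tᵀᵀ * Bj + B * (A⁻¹ * (X - T * Aj)) = Y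
      rw [transpose_transpose, ← Matrix.mul_assoc, Matrix.mul_sub, ← Matrix.mul_assoc]
      calc T * Bj + (B * A⁻¹ * X - B * A⁻¹ * T * Aj)
          = (T * Bj - B * A⁻¹ * T * Aj) + B * A⁻¹ * X := by abel
        _ = Y := by rw [hT, sub_add_cancel]

lemma isCompl_WSpace_entryPattern {A : Matrix ι ι ℂ} (hA : IsUnit A.det) (B : Matrix ι ι ℂ)
    (Aj Bj : Matrix κ κ ℂ) (s : Set (ι × κ))
    (h : IsCompl (LinearMap.range (reducedOffMap (B * A⁻¹) Aj Bj)) (supportedMatrices s)) :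
    IsCompl (WSpace A B Aj Bj) (entryPattern ∅ s) := by
  refine isCompl_iff.mpr ⟨Submodule.disjoint_def.mpr ?_, codisjoint_iff.mpr (eq_top_iff.mpr ?_)⟩
  · rintro ⟨X, Y⟩ hW hP
    obtain ⟨rfl, hY⟩ := mem_entryPattern_empty.mp hP
    rw [mem_WSpace_iff hA, Matrix.mul_zero, sub_zero] at hW
    rw [Submodule.disjoint_def.mp h.disjoint Y hW hY, Prod.mk_zero_zero]
  · rintro ⟨X, Y⟩ -
    obtain ⟨v, hv, c, hc, hvc⟩ :=
      Submodule.mem_sup.mp (h.codisjoint.eq_top ▸ Submodule.mem_top : Y - B * A⁻¹ * X ∈ _)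
    refine Submodule.mem_sup.mpr ⟨(X, Y - c), ?_, (0, c), mem_entryPattern_empty.mpr ⟨rfl, hc⟩,
      by simp⟩
    rwa [mem_WSpace_iff hA, sub_right_comm, ← hvc, add_sub_cancel_right]

end Reduction

section ShiftMatrices

variable (m : ℕ)

lemma FM_eq_submatrix :
    FM m = (1 : Matrix (Fin (m + 1)) (Fin (m + 1)) ℂ).submatrix Fin.castSucc id := by
  ext i j
  simp [FM, one_apply, Fin.ext_iff, eq_comm]

lemma GM_eq_submatrix :
    GM m = (1 : Matrix (Fin (m + 1)) (Fin (m + 1)) ℂ).submatrix Fin.succ id := by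
  ext i j
  simp [GM, one_apply, Fin.ext_iff, eq_comm]

lemma Matrix.one_submatrix_mul_transpose {α ι κ₁ κ₂ : Type*} [NonAssocSemiring α] [Fintype ι]
    [DecidableEq ι] (f : κ₁ → ι) (g : κ₂ → ι) :
    (1 : Matrix ι ι α).submatrix f id * ((1 : Matrix ι ι α).submatrix g id)ᵀ =
      (1 : Matrix ι ι α).submatrix f g := by
  rw [transpose_submatrix, transpose_one]
  exact submatrix_mul_equiv 1 1 f (Equiv.refl _) g |>.trans (by rw [Matrix.mul_one])

lemma GM_mul_GM_transpose : GM m * (GM m)ᵀ = 1 := by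
  rw [GM_eq_submatrix, one_submatrix_mul_transpose, submatrix_one _ (Fin.succ_injective _)]

lemma mul_GM_transpose_apply {ι : Type*} (M : Matrix ι (Fin (m + 1)) ℂ) (i : ι) (k : Fin m) :
    (M * (GM m)ᵀ) i k = M i k.succ := by
  simp [GM_eq_submatrix, mul_apply, one_apply]

lemma isNilpotent_FM_mul_GM_transpose : IsNilpotent (FM m * (GM m)ᵀ) := by
  refine isNilpotent_of_strictlyLowerTriangular _ fun i j hij => ?_
  rw [FM_eq_submatrix, GM_eq_submatrix, one_submatrix_mul_transpose, submatrix_apply]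
  exact one_apply_ne (Fin.ne_of_lt (Fin.castSucc_lt_succ_iff.mpr hij))

lemma isNilpotent_GM_mul_FM_transpose : IsNilpotent (GM m * (FM m)ᵀ) := by
  obtain ⟨k, hk⟩ := isNilpotent_FM_mul_GM_transpose m
  refine ⟨k, ?_⟩
  rw [← transpose_transpose (GM m), ← transpose_mul, ← transpose_pow, hk, transpose_zero]

lemma delM_eq_submatrix (n : ℕ) :
    delM n = (1 : Matrix (Fin n) (Fin n) ℂ).submatrix id Fin.rev := by
  ext i j
  have := j.isLt
  simp only [delM, of_apply, submatrix_apply, id, one_apply]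
  by_cases h : i = j.rev
  · rw [if_pos h, if_pos]
    rw [Fin.ext_iff, Fin.val_rev] at h
    omega
  · rw [if_neg h, if_neg]
    rw [Fin.ext_iff, Fin.val_rev] at h
    omega

lemma delM_mul_delM (n : ℕ) : delM n * delM n = 1 := by
  ext i j
  simp [delM_eq_submatrix, mul_apply, one_apply]

end ShiftMatrices

section ColumnBlocks

variable {ι : Type} {m : ℕ}

def colBlockEquiv (m : ℕ) : Fin (m + 1) ⊕ Fin m ≃ Fin (2 * m + 1) :=
  finSumFinEquiv.trans (finCongr (by omega))

def fromColsFin (U : Matrix ι (Fin (m + 1)) ℂ) (V : Matrix ι (Fin m) ℂ) :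
    Matrix ι (Fin (2 * m + 1)) ℂ :=
  (fromCols U V).submatrix id (colBlockEquiv m).symm

lemma fromColsFin_surjective (T : Matrix ι (Fin (2 * m + 1)) ℂ) :
    ∃ U V, fromColsFin U V = T :=
  ⟨(T.submatrix id (colBlockEquiv m)).toCols₁, (T.submatrix id (colBlockEquiv m)).toCols₂,
    by simp [fromColsFin, fromCols_toCols]⟩

lemma fromColsFin_sub (U U' : Matrix ι (Fin (m + 1)) ℂ) (V V' : Matrix ι (Fin m) ℂ) :
    fromColsFin U V - fromColsFin U' V' = fromColsFin (U - U') (V - V') := by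
  ext i j
  rcases h : (colBlockEquiv m).symm j with k | k <;> simp [fromColsFin, h]

@[simp]
lemma fromColsFin_zero : fromColsFin (0 : Matrix ι (Fin (m + 1)) ℂ) 0 = 0 := by
  simp [fromColsFin, fromCols_zero]

lemma L1M_eq_submatrix : L1M m =
    (fromBlocks 0 (FM m)ᵀ (FM m) 0).submatrix (colBlockEquiv m).symm (colBlockEquiv m).symm :=
  rfl

lemma L2M_eq_submatrix : L2M m =
    (fromBlocks 0 (GM m)ᵀ (GM m) 0).submatrix (colBlockEquiv m).symm (colBlockEquiv m).symm :=
  rfl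

lemma fromColsFin_mul_L1M (U : Matrix ι (Fin (m + 1)) ℂ) (V : Matrix ι (Fin m) ℂ) :
    fromColsFin U V * L1M m = fromColsFin (V * FM m) (U * (FM m)ᵀ) := by
  rw [fromColsFin, fromColsFin, L1M_eq_submatrix, submatrix_mul_equiv, fromCols_mul_fromBlocks]
  simp

lemma fromColsFin_mul_L2M (U : Matrix ι (Fin (m + 1)) ℂ) (V : Matrix ι (Fin m) ℂ) :
    fromColsFin U V * L2M m = fromColsFin (V * GM m) (U * (GM m)ᵀ) := by
  rw [fromColsFin, fromColsFin, L2M_eq_submatrix, submatrix_mul_equiv, fromCols_mul_fromBlocks]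
  simp

lemma fromColsFin_mem_supportedMatrices_iff (U : Matrix ι (Fin (m + 1)) ℂ)
    (V : Matrix ι (Fin m) ℂ) :
    fromColsFin U V ∈ supportedMatrices {p : ι × Fin (2 * m + 1) | (p.2 : ℕ) = 0} ↔
      U * (GM m)ᵀ = 0 ∧ V = 0 := by
  simp only [mem_supportedMatrices, Set.mem_ofPred_eq, ← Matrix.ext_iff, Matrix.zero_apply,
    mul_GM_transpose_apply]
  simp_rw [← (colBlockEquiv m).forall_congr_right, Sum.forall, Fin.forall_fin_succ]
  simp [fromColsFin, colBlockEquiv, forall_and]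

variable [Fintype ι]

lemma mul_fromColsFin (K : Matrix ι ι ℂ) (U : Matrix ι (Fin (m + 1)) ℂ)
    (V : Matrix ι (Fin m) ℂ) :
    K * fromColsFin U V = fromColsFin (K * U) (K * V) := by
  rw [fromColsFin, fromColsFin, ← mul_fromCols]
  rfl

lemma reducedOffMap_L_fromColsFin (K : Matrix ι ι ℂ) (U : Matrix ι (Fin (m + 1)) ℂ)
    (V : Matrix ι (Fin m) ℂ) :
    reducedOffMap K (L1M m) (L2M m) (fromColsFin U V) =
      fromColsFin (V * GM m - K * V * FM m) (U * (GM m)ᵀ - K * U * (FM m)ᵀ) := by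
  rw [reducedOffMap_apply, Matrix.mul_assoc, fromColsFin_mul_L1M, fromColsFin_mul_L2M,
    mul_fromColsFin, fromColsFin_sub, Matrix.mul_assoc, Matrix.mul_assoc]

end ColumnBlocks

lemma isCompl_range_reducedOffMap_L {ι : Type} [Fintype ι] {m : ℕ} (K : Matrix ι ι ℂ) :
    IsCompl (LinearMap.range (reducedOffMap K (L1M m) (L2M m)))
      (supportedMatrices {p : ι × Fin (2 * m + 1) | (p.2 : ℕ) = 0}) := by
  classical
  have hfirst (V : Matrix ι (Fin m) ℂ) :
      (V * GM m - K * V * FM m) * (GM m)ᵀ = V - K * V * (FM m * (GM m)ᵀ) := by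
    rw [Matrix.sub_mul, Matrix.mul_assoc, GM_mul_GM_transpose, Matrix.mul_one,
      Matrix.mul_assoc (K * V)]
  have hsecond (Y : Matrix ι (Fin m) ℂ) :
      Y * GM m * (GM m)ᵀ - K * (Y * GM m) * (FM m)ᵀ = Y - K * Y * (GM m * (FM m)ᵀ) := by
    rw [Matrix.mul_assoc Y, GM_mul_GM_transpose, Matrix.mul_one, ← Matrix.mul_assoc K,
      Matrix.mul_assoc (K * Y)]
  have bij_first := bijective_sub_mul_mul_of_isNilpotent K (isNilpotent_FM_mul_GM_transpose m)
  have bij_second := bijective_sub_mul_mul_of_isNilpotent K (isNilpotent_GM_mul_FM_transpose m)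
  refine LinearMap.isCompl_range_of _ _ (fun T hT => ?_) (fun Z => ?_)
  · obtain ⟨U, V, rfl⟩ := fromColsFin_surjective T
    rw [reducedOffMap_L_fromColsFin, fromColsFin_mem_supportedMatrices_iff, hfirst] at hT
    rw [reducedOffMap_L_fromColsFin]
    obtain ⟨hV, hU⟩ := hT
    obtain rfl : V = 0 := bij_first.injective (hV.trans (by simp))
    simp [hU]
  · obtain ⟨Z₁, Z₂, rfl⟩ := fromColsFin_surjective Z
    obtain ⟨V, hV⟩ := bij_first.surjective (Z₁ * (GM m)ᵀ)
    obtain ⟨Y, hY⟩ := bij_second.surjective Z₂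
    refine ⟨fromColsFin (Y * GM m) V, ?_⟩
    rw [reducedOffMap_L_fromColsFin, fromColsFin_sub, fromColsFin_mem_supportedMatrices_iff,
      Matrix.sub_mul, hfirst, hsecond]
    exact ⟨sub_eq_zero.mpr hV.symm, sub_eq_zero.mpr hY.symm⟩

theorem H_L_offdiagonal_general (n m : ℕ) (lam : ℂ) :
    Disjoint (WSpace (delM n) (lamM n lam) (L1M m) (L2M m))
      (entryPattern (∅ : Set (Fin n × Fin (2 * m + 1)))
        {pq : Fin n × Fin (2 * m + 1) | (pq.2 : ℕ) = 0}) ∧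
    WSpace (delM n) (lamM n lam) (L1M m) (L2M m) ⊔
      entryPattern (∅ : Set (Fin n × Fin (2 * m + 1)))
        {pq : Fin n × Fin (2 * m + 1) | (pq.2 : ℕ) = 0} = ⊤ := by
  have hΔ : IsUnit (delM n).det := isUnit_det_of_left_inverse (delM_mul_delM n)
  have hcompl := isCompl_WSpace_entryPattern hΔ (lamM n lam) (L1M m) (L2M m) _
    (isCompl_range_reducedOffMap_L _)
  exact ⟨hcompl.disjoint, hcompl.codisjoint.eq_top⟩

/-- **Off-diagonal blocks `H_n(λ)` vs `L_m`.** With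
`W = {(Rᵀ L_m^{(1)} + Δ_n S, Rᵀ L_m^{(2)} + Λ_n(λ) S)}` and `P` the pairs `(0, Y)` with
`Y` supported on the first column, one has
`ℂ^{n×(2m+1)} × ℂ^{n×(2m+1)} = W ⊕ P`. -/
theorem H_L_offdiagonal (n m : ℕ) (hn : 0 < n) (hm : 0 < m) (lam : ℂ) :
    Disjoint (WSpace (delM n) (lamM n lam) (L1M m) (L2M m))
      (entryPattern (∅ : Set (Fin n × Fin (2 * m + 1)))
        {pq : Fin n × Fin (2 * m + 1) | (pq.2 : ℕ) = 0}) ∧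
    WSpace (delM n) (lamM n lam) (L1M m) (L2M m) ⊔
      entryPattern (∅ : Set (Fin n × Fin (2 * m + 1)))
        {pq : Fin n × Fin (2 * m + 1) | (pq.2 : ℕ) = 0} = ⊤ :=
  H_L_offdiagonal_general n m lam
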